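/- arXiv:1704.07784 — 5 statements merged into one kernel-verified Lean document; each statement's English description precedes it below -/
import Mathlib

section
/- For every integer d ≥ 1, every d-regular finite simple graph G on n ≥ 1 vertices, and every real λ > 0, one has (1/n)·log Z^ind_G(λ) ≤ (1/(2d))·log Z^ind_{K_{d,d}}(λ). -/
open Finset
open scoped Classical

variable {V : Type} [Fintype V] [DecidableEq V]

/-- `M` is a matching of `G`: a finite set of edges of `G` that are pairwise vertex-disjoint. -/
def IsMatchingFinset (G : SimpleGraph V) (M : Finset (Sym2 V)) : Prop :=
  (∀ e ∈ M, e ∈ G.edgeSet) ∧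
    ∀ e ∈ M, ∀ f ∈ M, e ≠ f → ∀ v : V, v ∈ e → v ∉ f

/-- `I` is an independent set of `G`: a finite set of pairwise non-adjacent vertices. -/
def IsIndepFinset (G : SimpleGraph V) (I : Finset V) : Prop :=
  ∀ u ∈ I, ∀ v ∈ I, ¬ G.Adj u v

/-- `G` is `d`-regular: every vertex has exactly `d` neighbors. -/
def IsRegularGraph (G : SimpleGraph V) (d : ℕ) : Prop :=
  ∀ v : V, (Finset.univ.filter fun w => G.Adj v w).card = d

/-- The matching polynomial (monomer-dimer partition function) of `G` at fugacity `lam`. -/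
noncomputable def Zmatch (G : SimpleGraph V) (lam : ℝ) : ℝ :=
  ∑ M ∈ Finset.univ.filter (fun M : Finset (Sym2 V) => IsMatchingFinset G M), lam ^ M.card

/-- The independence polynomial (hard-core partition function) of `G` at fugacity `lam`. -/
noncomputable def Zind (G : SimpleGraph V) (lam : ℝ) : ℝ :=
  ∑ I ∈ Finset.univ.filter (fun I : Finset V => IsIndepFinset G I), lam ^ I.card

/-- `m_k(G)`: the number of matchings of size `k` in `G`. -/
noncomputable def matchCount (G : SimpleGraph V) (k : ℕ) : ℕ :=
  (Finset.univ.filter fun M : Finset (Sym2 V) => IsMatchingFinset G M ∧ M.card = k).card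

/-- `i_k(G)`: the number of independent sets of size `k` in `G`. -/
noncomputable def indepCount (G : SimpleGraph V) (k : ℕ) : ℕ :=
  (Finset.univ.filter fun I : Finset V => IsIndepFinset G I ∧ I.card = k).card

/-- The number of monochromatic edges of `G` under the coloring `χ`. -/
noncomputable def monoCount (G : SimpleGraph V) {q : ℕ} (χ : V → Fin q) : ℕ :=
  (Finset.univ.filter fun e : Sym2 V =>
    e ∈ G.edgeSet ∧ ∀ v ∈ e, ∀ w ∈ e, χ v = χ w).card

/-- `c^q_k(G)`: the number of `q`-colorings of `G` with exactly `k` monochromatic edges. -/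
noncomputable def colCount (G : SimpleGraph V) (q k : ℕ) : ℕ :=
  (Finset.univ.filter fun χ : V → Fin q => monoCount G χ = k).card

/-- The disjoint union of `m` copies of the graph `H`. -/
def copies (m : ℕ) {W : Type} (H : SimpleGraph W) : SimpleGraph (Fin m × W) where
  Adj a b := a.1 = b.1 ∧ H.Adj a.2 b.2
  symm := ⟨fun a b h => ⟨h.1.symm, h.2.symm⟩⟩
  loopless := ⟨fun a h => H.loopless.irrefl a.2 h.2⟩

/-- `H_{d,n}` for `n = 2dm`: the disjoint union of `m` copies of `K_{d,d}`. -/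
def Hgraph (d m : ℕ) : SimpleGraph (Fin m × (Fin d ⊕ Fin d)) :=
  copies m (completeBipartiteGraph (Fin d) (Fin d))

/-!
Zhao's bipartite swapping trick: for independent sets `I`, `J` of `G`, sending each component
of `G[I ∆ J]` wholesale to one of two sets gives a weight-preserving injection from pairs of
independent sets into pairs `(A, B)` with no edge from `A` to `B`, i.e. into independent sets of
the bipartite double cover `G × K₂`. Hence `Z_G(λ)² ≤ Z_{G × K₂}(λ)`.

Summing over `B` first, `Z_{G × K₂}(λ) = ∑_S λ^|S| (1 + λ)^#{v : N(v) ∩ S = ∅}`, which for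
`d`-regular `G` is `∑_S (∏_v w(S ∩ N(v)))^(1/d)` for suitable weights `w`. Every vertex lies in
exactly `d` neighbourhoods, so a Hölder-type (Finner) inequality bounds this by
`∏_v (∑_{T ⊆ N(v)} w(T))^(1/d) = Z_{K_{d,d}}(λ)^(n/d)`. Taking logarithms gives the claim.
-/

open Real
open scoped symmDiff

section Finner

variable {ι α : Type*}

theorem geom_mean_le_mean_div_mul {s : Finset ι} (hs : s.Nonempty) {z w : ι → ℝ}
    (hz : ∀ i ∈ s, 0 ≤ z i) (hw : ∀ i ∈ s, 0 < w i) :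
    (∏ i ∈ s, z i) ^ (#s : ℝ)⁻¹ ≤ (∑ i ∈ s, z i / w i) / #s * (∏ i ∈ s, w i) ^ (#s : ℝ)⁻¹ := by
  have hzw : ∀ i ∈ s, 0 ≤ z i / w i := fun i hi => div_nonneg (hz i hi) (hw i hi).le
  have amgm := geom_mean_le_arith_mean s (fun _ => 1) (fun i => z i / w i) (by simp)
    (by simpa using hs) hzw
  simp only [rpow_one, sum_const, nsmul_eq_mul, mul_one, one_mul] at amgm
  calc (∏ i ∈ s, z i) ^ (#s : ℝ)⁻¹
      = (∏ i ∈ s, z i / w i) ^ (#s : ℝ)⁻¹ * (∏ i ∈ s, w i) ^ (#s : ℝ)⁻¹ := by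
        rw [← mul_rpow (prod_nonneg hzw) (prod_nonneg fun i hi => (hw i hi).le),
          ← prod_mul_distrib]
        exact congrArg (· ^ _) (prod_congr rfl fun i hi => (div_mul_cancel₀ _ (hw i hi).ne').symm)
    _ ≤ _ := by gcongr; exact rpow_nonneg (prod_nonneg fun i hi => (hw i hi).le) _

theorem geom_mean_add_geom_mean_le {s : Finset ι} (hs : s.Nonempty) {x y : ι → ℝ}
    (hx : ∀ i ∈ s, 0 ≤ x i) (hy : ∀ i ∈ s, 0 ≤ y i) :
    (∏ i ∈ s, x i) ^ (#s : ℝ)⁻¹ + (∏ i ∈ s, y i) ^ (#s : ℝ)⁻¹ ≤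
      (∏ i ∈ s, (x i + y i)) ^ (#s : ℝ)⁻¹ := by
  by_cases hpos : ∀ i ∈ s, 0 < x i + y i
  · have hsum : (∑ i ∈ s, x i / (x i + y i)) + ∑ i ∈ s, y i / (x i + y i) = #s := by
      rw [← sum_add_distrib, card_eq_sum_ones, Nat.cast_sum]
      exact sum_congr rfl fun i hi => by rw [← add_div, div_self (hpos i hi).ne', Nat.cast_one]
    calc _ ≤ (∑ i ∈ s, x i / (x i + y i)) / #s * (∏ i ∈ s, (x i + y i)) ^ (#s : ℝ)⁻¹ +
          (∑ i ∈ s, y i / (x i + y i)) / #s * (∏ i ∈ s, (x i + y i)) ^ (#s : ℝ)⁻¹ :=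
          add_le_add (geom_mean_le_mean_div_mul hs hx hpos) (geom_mean_le_mean_div_mul hs hy hpos)
      _ = _ := by
        rw [← add_mul, ← add_div, hsum, div_self (by simpa using hs.ne_empty), one_mul]
  · push Not at hpos
    obtain ⟨i, hi, hxy⟩ := hpos
    have hxi : x i = 0 := by linarith [hx i hi, hy i hi]
    have hyi : y i = 0 := by linarith [hx i hi, hy i hi]
    rw [prod_eq_zero hi hxi, prod_eq_zero hi hyi, zero_rpow (by simpa using hs.ne_empty),
      add_zero]
    exact rpow_nonneg (prod_nonneg fun j hj => add_nonneg (hx j hj) (hy j hj)) _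

theorem prod_rpow_add_prod_rpow_le {B : Finset ι} {p : ι → Prop} [DecidablePred p] {d : ℕ}
    (hd : d ≠ 0) (hcard : #{b ∈ B | p b} = d) {x y : ι → ℝ} (hx : ∀ b ∈ B, 0 ≤ x b)
    (hy : ∀ b ∈ B, 0 ≤ y b) (hxy : ∀ b ∈ B, ¬ p b → y b = x b) :
    (∏ b ∈ B, x b) ^ (d : ℝ)⁻¹ + (∏ b ∈ B, y b) ^ (d : ℝ)⁻¹ ≤
      (∏ b ∈ B, if p b then x b + y b else x b) ^ (d : ℝ)⁻¹ := by
  have hne : {b ∈ B | p b}.Nonempty := card_pos.mp (hcard ▸ Nat.pos_of_ne_zero hd)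
  have hxD : ∀ b ∈ {b ∈ B | p b}, 0 ≤ x b := fun b hb => hx b (mem_filter.mp hb).1
  have hyD : ∀ b ∈ {b ∈ B | p b}, 0 ≤ y b := fun b hb => hy b (mem_filter.mp hb).1
  have hC : 0 ≤ ∏ b ∈ B with ¬ p b, x b := prod_nonneg fun b hb => hx b (mem_filter.mp hb).1
  have hyC : ∏ b ∈ B with ¬ p b, y b = ∏ b ∈ B with ¬ p b, x b :=
    prod_congr rfl fun b hb => hxy b (mem_filter.mp hb).1 (mem_filter.mp hb).2
  rw [← prod_filter_mul_prod_filter_not B p x, ← prod_filter_mul_prod_filter_not B p y,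
    ← prod_filter_mul_prod_filter_not B p, prod_ite_of_true (fun b hb => (mem_filter.mp hb).2),
    prod_ite_of_false (fun b hb => (mem_filter.mp hb).2), hyC,
    mul_rpow (prod_nonneg hxD) hC, mul_rpow (prod_nonneg hyD) hC,
    mul_rpow (prod_nonneg fun b hb => add_nonneg (hxD b hb) (hyD b hb)) hC, ← add_mul]
  gcongr
  simpa only [hcard] using geom_mean_add_geom_mean_le hne hxD hyD

theorem sum_powerset_erase_add_insert {M : Type*} [AddCommMonoid M] [DecidableEq α] {a : α}
    {s : Finset α} (ha : a ∈ s) (f : Finset α → M) :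
    ∑ T ∈ (s.erase a).powerset, (f T + f (insert a T)) = ∑ T ∈ s.powerset, f T := by
  rw [sum_add_distrib, ← sum_powerset_insert (notMem_erase a s), insert_erase ha]

/-- Finner's inequality for a family `N` covering every point of `A` exactly `d` times. -/
theorem sum_powerset_prod_rpow_le [DecidableEq α] (B : Finset ι) {d : ℕ} (hd : d ≠ 0)
    (A : Finset α) (N : ι → Finset α) (h : ι → Finset α → ℝ) (hh : ∀ b ∈ B, ∀ T, 0 ≤ h b T)
    (hcover : ∀ a ∈ A, #{b ∈ B | a ∈ N b} = d) :
    ∑ S ∈ A.powerset, (∏ b ∈ B, h b (S ∩ N b)) ^ (d : ℝ)⁻¹ ≤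
      ∏ b ∈ B, (∑ T ∈ (N b).powerset, h b T) ^ (d : ℝ)⁻¹ := by
  induction A using Finset.induction_on generalizing N h with
  | empty =>
    rw [powerset_empty, sum_singleton, ← finsetProd_rpow _ _ fun b hb => hh b hb _]
    refine prod_le_prod (fun b hb => rpow_nonneg (hh b hb _) _) fun b hb => ?_
    rw [empty_inter]
    gcongr
    exacts [hh b hb _, single_le_sum (fun T _ => hh b hb T) (empty_mem_powerset _)]
  | insert a A ha ih =>
    -- `g b` sums out the point `a`, reducing to the cover `b ↦ N b \ {a}` of `A`
    set g : ι → Finset α → ℝ := fun b T => if a ∈ N b then h b T + h b (insert a T) else h b T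
    have hg : ∀ b ∈ B, ∀ T, 0 ≤ g b T := fun b hb T => by
      unfold g; split_ifs <;> positivity [hh b hb T, hh b hb (insert a T)]
    have hcover' : ∀ a' ∈ A, #{b ∈ B | a' ∈ (N b).erase a} = d := fun a' ha' => by
      have hne : a' ≠ a := ne_of_mem_of_not_mem ha' ha
      simpa [mem_erase, hne] using hcover a' (mem_insert_of_mem ha')
    have hpoint : ∀ S ∈ A.powerset, (∏ b ∈ B, h b (S ∩ N b)) ^ (d : ℝ)⁻¹ +
        (∏ b ∈ B, h b (insert a S ∩ N b)) ^ (d : ℝ)⁻¹ ≤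
          (∏ b ∈ B, g b (S ∩ (N b).erase a)) ^ (d : ℝ)⁻¹ := fun S hS => by
      have haS : a ∉ S := fun hmem => ha (mem_powerset.mp hS hmem)
      convert prod_rpow_add_prod_rpow_le (x := fun b => h b (S ∩ N b))
        (y := fun b => h b (insert a S ∩ N b)) hd (hcover a (mem_insert_self a A))
        (fun b hb => hh b hb _) (fun b hb => hh b hb _)
        (fun b _ hab => by rw [insert_inter_of_notMem hab]) using 3 with b
      rw [inter_erase, erase_eq_of_notMem fun hmem => haS (mem_inter.mp hmem).1]
      unfold g
      split_ifs with hab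
      · rw [insert_inter_of_mem hab]
      · rfl
    have hsum : ∀ b ∈ B, ∑ T ∈ ((N b).erase a).powerset, g b T = ∑ T ∈ (N b).powerset, h b T := by
      intro b _
      unfold g
      split_ifs with hab
      exacts [sum_powerset_erase_add_insert hab _, by rw [erase_eq_of_notMem hab]]
    calc ∑ S ∈ (insert a A).powerset, (∏ b ∈ B, h b (S ∩ N b)) ^ (d : ℝ)⁻¹
        = ∑ S ∈ A.powerset, ((∏ b ∈ B, h b (S ∩ N b)) ^ (d : ℝ)⁻¹ +
            (∏ b ∈ B, h b (insert a S ∩ N b)) ^ (d : ℝ)⁻¹) := by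
          rw [sum_powerset_insert ha, sum_add_distrib]
      _ ≤ ∑ S ∈ A.powerset, (∏ b ∈ B, g b (S ∩ (N b).erase a)) ^ (d : ℝ)⁻¹ := sum_le_sum hpoint
      _ ≤ ∏ b ∈ B, (∑ T ∈ ((N b).erase a).powerset, g b T) ^ (d : ℝ)⁻¹ := ih _ _ hg hcover'
      _ = ∏ b ∈ B, (∑ T ∈ (N b).powerset, h b T) ^ (d : ℝ)⁻¹ :=
          prod_congr rfl fun b hb => by rw [hsum b hb]

theorem sum_card_inter_eq_card_mul [DecidableEq α] (B : Finset ι) (N : ι → Finset α)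
    {S : Finset α} {d : ℕ} (h : ∀ a ∈ S, #{b ∈ B | a ∈ N b} = d) :
    ∑ b ∈ B, #(S ∩ N b) = #S * d := by
  calc ∑ b ∈ B, #(S ∩ N b) = ∑ b ∈ B, ∑ a ∈ S, if a ∈ N b then 1 else 0 := by
        simp_rw [← filter_mem_eq_inter, card_filter]
    _ = ∑ a ∈ S, #{b ∈ B | a ∈ N b} := by rw [sum_comm]; simp_rw [card_filter]
    _ = #S * d := by rw [sum_congr rfl h, sum_const, smul_eq_mul]

theorem sum_powerset_pow_card {R : Type*} [CommSemiring R] (a : R) (s : Finset α) :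
    ∑ t ∈ s.powerset, a ^ #t = (a + 1) ^ #s := by
  simpa using sum_pow_mul_eq_add_pow a 1 s

end Finner

section ZhaoSwap

variable {α : Type} (G : SimpleGraph α)

theorem spanningCoe_induce_adj {s : Set α} {u v : α} :
    (G.induce s).spanningCoe.Adj u v ↔ u ∈ s ∧ v ∈ s ∧ G.Adj u v := by
  simp only [SimpleGraph.map_adj, SimpleGraph.comap_adj, Function.Embedding.subtype_apply,
    Subtype.exists, exists_and_left, exists_prop, ↓existsAndEq, and_true, true_and]
  tauto

noncomputable def componentRep (s : Set α) (v : α) : α :=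
  ((G.induce s).spanningCoe.connectedComponentMk v).out

theorem reachable_componentRep (s : Set α) (v : α) :
    (G.induce s).spanningCoe.Reachable (componentRep G s v) v :=
  SimpleGraph.ConnectedComponent.eq.mp (Quot.out_eq _)

theorem componentRep_eq_of_adj {s : Set α} {u v : α} (hu : u ∈ s) (hv : v ∈ s)
    (huv : G.Adj u v) : componentRep G s u = componentRep G s v := by
  unfold componentRep
  rw [SimpleGraph.ConnectedComponent.sound
    ((spanningCoe_induce_adj G).mpr ⟨hu, hv, huv⟩).reachable]

variable [DecidableEq α]

theorem mem_iff_notMem_of_adj {I J : Finset α} (hI : IsIndepFinset G I)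
    (hJ : IsIndepFinset G J) {u v : α} (hu : u ∈ I ∆ J) (hv : v ∈ I ∆ J) (huv : G.Adj u v) :
    v ∈ I ↔ u ∉ I := by
  rw [mem_symmDiff] at hu hv
  have := hI u; have := hJ u
  tauto

theorem mem_iff_of_reachable {I J I' J' : Finset α} (hI : IsIndepFinset G I)
    (hJ : IsIndepFinset G J) (hI' : IsIndepFinset G I') (hJ' : IsIndepFinset G J')
    (hS : I ∆ J = I' ∆ J') {u v : α} (huv : (G.induce ↑(I ∆ J)).spanningCoe.Reachable u v)
    (hu : u ∈ I ↔ u ∈ I') : v ∈ I ↔ v ∈ I' := by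
  rw [SimpleGraph.reachable_iff_reflTransGen] at huv
  induction huv with
  | refl => exact hu
  | tail _ hadj ih =>
    obtain ⟨hx, hy, hxy⟩ := (spanningCoe_induce_adj G).mp hadj
    rw [mem_iff_notMem_of_adj G hI hJ hx hy hxy,
      mem_iff_notMem_of_adj G hI' hJ' (hS ▸ hx) (hS ▸ hy) hxy, ih]

/-- Zhao's swap: each component of `G[I ∆ J]` goes wholesale to one of the two sets. -/
noncomputable def zhaoSwap (I J : Finset α) : Finset α × Finset α :=
  (I ∩ J ∪ {v ∈ I ∆ J | componentRep G ↑(I ∆ J) v ∈ I},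
    I ∩ J ∪ {v ∈ I ∆ J | componentRep G ↑(I ∆ J) v ∉ I})

theorem card_zhaoSwap (I J : Finset α) :
    #(zhaoSwap G I J).1 + #(zhaoSwap G I J).2 = #I + #J := by
  have hdisj : Disjoint (I ∩ J) (I ∆ J) := (disjoint_symmDiff_inf I J).symm
  have hunion : I ∩ J ∪ I ∆ J = I ∪ J := union_comm (I ∆ J) _ ▸ symmDiff_sup_inf I J
  rw [zhaoSwap, card_union_of_disjoint (hdisj.mono_right (filter_subset _ _)),
    card_union_of_disjoint (hdisj.mono_right (filter_subset _ _)),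
    ← card_union_add_card_inter I J, ← hunion, card_union_of_disjoint hdisj,
    ← card_filter_add_card_filter_not (s := I ∆ J) (fun v => componentRep G ↑(I ∆ J) v ∈ I)]
  ring

theorem zhaoSwap_inter (I J : Finset α) :
    (zhaoSwap G I J).1 ∩ (zhaoSwap G I J).2 = I ∩ J := by
  ext v; simp only [zhaoSwap, mem_inter, mem_union, mem_filter]; tauto

theorem zhaoSwap_union (I J : Finset α) :
    (zhaoSwap G I J).1 ∪ (zhaoSwap G I J).2 = I ∪ J := by
  ext v; simp only [zhaoSwap, mem_inter, mem_union, mem_filter, mem_symmDiff]; tauto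

theorem zhaoSwap_not_adj {I J : Finset α} (hI : IsIndepFinset G I) (hJ : IsIndepFinset G J) :
    ∀ u ∈ (zhaoSwap G I J).1, ∀ v ∈ (zhaoSwap G I J).2, ¬ G.Adj u v := by
  intro u hu v hv huv
  simp only [zhaoSwap, mem_union, mem_inter, mem_filter] at hu hv
  rcases hu with ⟨huI, huJ⟩ | ⟨huS, hru⟩ <;> rcases hv with ⟨hvI, hvJ⟩ | ⟨hvS, hrv⟩
  · exact hI u huI v hvI huv
  · rcases mem_symmDiff.mp hvS with ⟨hvI, -⟩ | ⟨hvJ, -⟩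
    exacts [hI u huI v hvI huv, hJ u huJ v hvJ huv]
  · rcases mem_symmDiff.mp huS with ⟨huI, -⟩ | ⟨huJ, -⟩
    exacts [hI u huI v hvI huv, hJ u huJ v hvJ huv]
  · exact hrv (componentRep_eq_of_adj G huS hvS huv ▸ hru)

theorem zhaoSwap_injective {I J I' J' : Finset α} (hI : IsIndepFinset G I)
    (hJ : IsIndepFinset G J) (hI' : IsIndepFinset G I') (hJ' : IsIndepFinset G J')
    (h : zhaoSwap G I J = zhaoSwap G I' J') : I = I' ∧ J = J' := by
  have hT : I ∩ J = I' ∩ J' := by rw [← zhaoSwap_inter G I J, ← zhaoSwap_inter G I' J', h]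
  have hS : I ∆ J = I' ∆ J' := by
    rw [symmDiff_eq_sup_sdiff_inf, symmDiff_eq_sup_sdiff_inf, sup_eq_union, sup_eq_union,
      inf_eq_inter, inf_eq_inter, ← zhaoSwap_union G I J, ← zhaoSwap_union G I' J', h, hT]
  have hII' : I = I' := by
    ext v
    by_cases hv : v ∈ I ∆ J
    · -- membership of the representative is read off from `zhaoSwap`, then propagates along
      -- the component because `I` alternates along its edges
      have hr : componentRep G ↑(I ∆ J) v ∈ I ↔ componentRep G ↑(I ∆ J) v ∈ I' := by
        have h1 := congrArg (v ∈ ·.1) h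
        simp only [zhaoSwap, mem_union, mem_filter, ← hS, ← hT, eq_iff_iff] at h1
        have hvT : v ∉ I ∩ J := disjoint_left.mp (disjoint_symmDiff_inf I J) hv
        tauto
      exact mem_iff_of_reachable G hI hJ hI' hJ' hS (reachable_componentRep G _ v) hr
    · have hv' : v ∉ I' ∆ J' := hS ▸ hv
      rw [mem_symmDiff] at hv hv'
      have := congrArg (v ∈ ·) hT
      simp only [mem_inter, eq_iff_iff] at this
      tauto
  refine ⟨hII', ?_⟩
  rw [← symmDiff_symmDiff_cancel_left I J, hS, hII', symmDiff_symmDiff_cancel_left]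

end ZhaoSwap

theorem isIndepFinset_completeBipartiteGraph_iff {α β : Type} {I : Finset (α ⊕ β)} :
    IsIndepFinset (completeBipartiteGraph α β) I ↔
      (∀ x ∈ I, x.isLeft) ∨ ∀ x ∈ I, x.isRight := by
  simp only [IsIndepFinset, completeBipartiteGraph_adj]
  constructor
  · intro h
    by_contra! hne
    obtain ⟨⟨u, hu, hul⟩, ⟨v, hv, hvr⟩⟩ := hne
    cases u <;> cases v <;> grind
  · rintro (h | h) u hu v hv
    · simp [h u hu, h v hv]
    · simp [h u hu, h v hv]

theorem Zind_completeBipartiteGraph (α β : Type) [Fintype α] [Fintype β] (lam : ℝ) :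
    Zind (completeBipartiteGraph α β) lam =
      (lam + 1) ^ Fintype.card α + (lam + 1) ^ Fintype.card β - 1 := by
  set L : Finset (α ⊕ β) := univ.map .inl
  set R : Finset (α ⊕ β) := univ.map .inr
  have hindep : ({I | IsIndepFinset (completeBipartiteGraph α β) I} : Finset (Finset (α ⊕ β))) =
      L.powerset ∪ R.powerset := by
    ext I
    simp [L, R, subset_iff, isIndepFinset_completeBipartiteGraph_iff, Sum.isLeft_iff,
      Sum.isRight_iff]
  have hinter : L.powerset ∩ R.powerset = {∅} := by
    ext I
    rw [mem_inter, mem_powerset, mem_powerset, ← subset_inter_iff,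
      disjoint_iff_inter_eq_empty.mp (disjoint_map_inl_map_inr univ univ), subset_empty,
      mem_singleton]
  have := sum_union_inter (s₁ := L.powerset) (s₂ := R.powerset) (f := fun I => lam ^ #I)
  rw [hinter, sum_singleton, card_empty, pow_zero, sum_powerset_pow_card, sum_powerset_pow_card,
    card_map, card_map, card_univ, card_univ] at this
  rw [Zind, hindep]
  linarith

section HardCore

variable {W : Type} [Fintype W] (G : SimpleGraph W)

theorem one_le_Zind {lam : ℝ} (hlam : 0 ≤ lam) : 1 ≤ Zind G lam := by
  have hempty : (∅ : Finset W) ∈ ({I | IsIndepFinset G I} : Finset (Finset W)) :=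
    mem_filter.mpr ⟨mem_univ _, by simp [IsIndepFinset]⟩
  calc 1 = lam ^ #(∅ : Finset W) := by simp
    _ ≤ Zind G lam := single_le_sum (f := fun I => lam ^ #I) (fun I _ => pow_nonneg hlam _) hempty

theorem IsRegularGraph.card_neighborFinset {d : ℕ} (hreg : IsRegularGraph G d) (v : W) :
    #(G.neighborFinset v) = d := by
  rw [SimpleGraph.neighborFinset_eq_filter]; exact hreg v

variable [DecidableEq W]

theorem IsRegularGraph.card_filter_mem_neighborFinset {d : ℕ} (hreg : IsRegularGraph G d)
    (u : W) : #{v | u ∈ G.neighborFinset v} = d := by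
  simp_rw [SimpleGraph.mem_neighborFinset, G.adj_comm _ u]; exact hreg u

/-- The hard-core partition function of the bipartite double cover `G × K₂`: its independent
sets are the pairs `(I, J)` with no edge of `G` from `I` to `J`. -/
noncomputable def Zdouble (lam : ℝ) : ℝ :=
  ∑ p : Finset W × Finset W with ∀ u ∈ p.1, ∀ v ∈ p.2, ¬ G.Adj u v, lam ^ (#p.1 + #p.2)

theorem Zind_sq_le_Zdouble {lam : ℝ} (hlam : 0 ≤ lam) : Zind G lam ^ 2 ≤ Zdouble G lam := by
  set P : Finset (Finset W) := {I | IsIndepFinset G I}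
  have hP : ∀ I ∈ P, IsIndepFinset G I := fun I hI => (mem_filter.mp hI).2
  have hinj : Set.InjOn (fun p : Finset W × Finset W => zhaoSwap G p.1 p.2) ↑(P ×ˢ P) := by
    rintro ⟨I, J⟩ hIJ ⟨I', J'⟩ hIJ' h
    rw [coe_product, Set.mem_prod] at hIJ hIJ'
    obtain ⟨rfl, rfl⟩ := zhaoSwap_injective G (hP I hIJ.1) (hP J hIJ.2) (hP I' hIJ'.1)
      (hP J' hIJ'.2) h
    rfl
  calc Zind G lam ^ 2 = ∑ p ∈ P ×ˢ P, lam ^ (#p.1 + #p.2) := by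
        rw [sq, Zind, sum_mul_sum, sum_product]; simp_rw [pow_add]; rfl
    _ = ∑ p ∈ P ×ˢ P, lam ^ (#(zhaoSwap G p.1 p.2).1 + #(zhaoSwap G p.1 p.2).2) := by
        simp_rw [card_zhaoSwap]
    _ = ∑ q ∈ (P ×ˢ P).image (fun p => zhaoSwap G p.1 p.2), lam ^ (#q.1 + #q.2) :=
        (sum_image (f := fun q => lam ^ (#q.1 + #q.2)) hinj).symm
    _ ≤ Zdouble G lam := by
        refine sum_le_sum_of_subset_of_nonneg (fun q hq => ?_) fun _ _ _ => pow_nonneg hlam _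
        obtain ⟨⟨I, J⟩, hIJ, rfl⟩ := mem_image.mp hq
        rw [mem_product] at hIJ
        exact mem_filter.mpr ⟨mem_univ _, zhaoSwap_not_adj G (hP I hIJ.1) (hP J hIJ.2)⟩

theorem Zdouble_eq_sum (lam : ℝ) :
    Zdouble G lam =
      ∑ S : Finset W, lam ^ #S * (lam + 1) ^ #{v | S ∩ G.neighborFinset v = ∅} := by
  rw [Zdouble, sum_filter, ← univ_product_univ, sum_product]
  refine sum_congr rfl fun I _ => ?_
  have hfree : ({J | ∀ u ∈ I, ∀ v ∈ J, ¬ G.Adj u v} : Finset (Finset W)) =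
      ({v | I ∩ G.neighborFinset v = ∅} : Finset W).powerset := by
    ext J
    simp only [mem_filter, mem_univ, true_and, mem_powerset, subset_iff,
      eq_empty_iff_forall_notMem, mem_inter, SimpleGraph.mem_neighborFinset, not_and]
    exact ⟨fun h v hv u hu huv => h u hu v hv huv.symm, fun h u hu v hv huv => h hv u hu huv.symm⟩
  rw [← sum_filter, hfree, ← sum_powerset_pow_card, mul_sum]
  simp_rw [pow_add]

/-- `w := nbhdWeight d λ` is chosen so that, for `d`-regular `G`,
`∏_v w(S ∩ N(v)) = (λ^|S| (1 + λ)^#{v : S ∩ N(v) = ∅})^d` (each vertex of `S` lies in `d`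
neighbourhoods), while `∑_{T ⊆ N(v)} w(T) = Z_{K_{d,d}}(λ)`. -/
noncomputable def nbhdWeight {α : Type*} [DecidableEq α] (d : ℕ) (lam : ℝ) (T : Finset α) : ℝ :=
  lam ^ #T * if T = ∅ then (lam + 1) ^ d else 1

theorem sum_powerset_nbhdWeight {α : Type*} [DecidableEq α] {d : ℕ} {s : Finset α}
    (hs : #s = d) (lam : ℝ) :
    ∑ T ∈ s.powerset, nbhdWeight d lam T = (lam + 1) ^ d + (lam + 1) ^ d - 1 := by
  have hw : ∀ T : Finset α,
      nbhdWeight d lam T = lam ^ #T + if T = ∅ then (lam + 1) ^ d - 1 else 0 := by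
    intro T
    unfold nbhdWeight
    split_ifs with hT
    · rw [hT, card_empty, pow_zero]; ring
    · ring
  simp_rw [hw, sum_add_distrib, sum_powerset_pow_card, sum_ite_eq' _ _ (fun _ => _),
    if_pos (empty_mem_powerset s), hs]
  ring

theorem prod_nbhdWeight {d : ℕ} (hreg : IsRegularGraph G d) (lam : ℝ) (S : Finset W) :
    ∏ v, nbhdWeight d lam (S ∩ G.neighborFinset v) =
      (lam ^ #S * (lam + 1) ^ #{v | S ∩ G.neighborFinset v = ∅}) ^ d := by
  simp only [nbhdWeight]
  rw [prod_mul_distrib, prod_pow_eq_pow_sum, ← prod_filter, prod_const,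
    sum_card_inter_eq_card_mul _ _ fun u _ => hreg.card_filter_mem_neighborFinset G u,
    mul_pow, ← pow_mul, ← pow_mul, ← pow_mul, mul_comm d]

theorem Zdouble_le_of_regular {d : ℕ} (hd : d ≠ 0) (hreg : IsRegularGraph G d) {lam : ℝ}
    (hlam : 0 ≤ lam) :
    Zdouble G lam ≤
      (Zind (completeBipartiteGraph (Fin d) (Fin d)) lam ^ (d : ℝ)⁻¹) ^ Fintype.card W := by
  calc Zdouble G lam
      = ∑ S ∈ univ.powerset, (∏ v, nbhdWeight d lam (S ∩ G.neighborFinset v)) ^ (d : ℝ)⁻¹ := by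
        rw [Zdouble_eq_sum, powerset_univ]
        refine sum_congr rfl fun S _ => ?_
        rw [prod_nbhdWeight G hreg, pow_rpow_inv_natCast (by positivity) hd]
    _ ≤ ∏ v, (∑ T ∈ (G.neighborFinset v).powerset, nbhdWeight d lam T) ^ (d : ℝ)⁻¹ :=
        sum_powerset_prod_rpow_le _ hd _ _ _ (fun _ _ _ => by unfold nbhdWeight; positivity)
          fun u _ => hreg.card_filter_mem_neighborFinset G u
    _ = _ := by
        simp_rw [sum_powerset_nbhdWeight (hreg.card_neighborFinset G _),
          Zind_completeBipartiteGraph, Fintype.card_fin, prod_const, card_univ]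

end HardCore

/-- For every `d ≥ 1`, every `d`-regular graph `G` on `n ≥ 1` vertices and
every `λ > 0`, `(1/n) log Z^ind_G(λ) ≤ (1/(2d)) log Z^ind_{K_{d,d}}(λ)`. -/
theorem independence_free_energy_le (d : ℕ) (hd : 1 ≤ d)
    {V : Type} [Fintype V] [DecidableEq V] (G : SimpleGraph V)
    (hn : 1 ≤ Fintype.card V) (hreg : IsRegularGraph G d)
    (lam : ℝ) (hlam : 0 < lam) :
    (1 / (Fintype.card V : ℝ)) * Real.log (Zind G lam) ≤
      (1 / (2 * (d : ℝ))) *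
        Real.log (Zind (completeBipartiteGraph (Fin d) (Fin d)) lam) := by
  set K := Zind (completeBipartiteGraph (Fin d) (Fin d)) lam
  have hZ : 0 < Zind G lam := zero_lt_one.trans_le (one_le_Zind G hlam.le)
  have hK : 0 < K := zero_lt_one.trans_le (one_le_Zind _ hlam.le)
  have hsq : Zind G lam ^ 2 ≤ (K ^ (d : ℝ)⁻¹) ^ Fintype.card V :=
    (Zind_sq_le_Zdouble G hlam.le).trans (Zdouble_le_of_regular G (by omega) hreg hlam.le)
  have hlog : 2 * log (Zind G lam) ≤ Fintype.card V * ((d : ℝ)⁻¹ * log K) := by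
    simpa [log_rpow hK] using log_le_log (by positivity) hsq
  have hn' : (0 : ℝ) < Fintype.card V := by exact_mod_cast hn
  have hd' : (0 : ℝ) < d := by exact_mod_cast hd
  calc 1 / (Fintype.card V : ℝ) * log (Zind G lam)
      = 2 * log (Zind G lam) / (2 * Fintype.card V) := by field_simp
    _ ≤ Fintype.card V * ((d : ℝ)⁻¹ * log K) / (2 * Fintype.card V) := by gcongr
    _ = 1 / (2 * (d : ℝ)) * log K := by field_simp
end

section
/- For every finite simple graph G, every edge e of G, and every real λ ≥ 0, the total weight of matchings containing e is at most λ/(1+λ) times the total weight of all matchings: ∑_{M ∈ M(G), e ∈ M} λ^{|M|} ≤ (λ/(1+λ)) · ∑_{M ∈ M(G)} λ^{|M|}. In particular, in the monomer-dimer model on G at fugacity λ, any given edge belongs to the random matching with probability at most λ/(1+λ). -/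
/-!
Matchings form a down-closed family of edge sets. Deleting `e` maps the matchings containing `e`
injectively into those avoiding it while lowering the weight by exactly a factor `λ`, so
`Z_e ≤ λ (Z - Z_e)`, which rearranges to `Z_e ≤ λ/(1+λ) · Z`.
-/

open Finset
open scoped Classical

variable {V : Type} [Fintype V] [DecidableEq V]

section LowerSet

variable {α : Type*} [DecidableEq α]

theorem Finset.sum_filter_mem_pow_card_eq_mul_sum_memberSubfamily {R : Type*} [CommSemiring R]
    (𝒜 : Finset (Finset α)) (a : α) (x : R) :
    ∑ s ∈ 𝒜 with a ∈ s, x ^ #s = x * ∑ s ∈ 𝒜.memberSubfamily a, x ^ #s := by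
  have hinj : Set.InjOn (insert a) (𝒜.memberSubfamily a : Set (Finset α)) :=
    insert_erase_invOn.2.injOn.mono fun s hs => (mem_memberSubfamily.1 hs).2
  rw [← image_insert_memberSubfamily, sum_image hinj, mul_sum]
  refine sum_congr rfl fun s hs => ?_
  rw [card_insert_of_notMem (mem_memberSubfamily.1 hs).2, pow_succ']

variable {𝒜 : Finset (Finset α)}

theorem IsLowerSet.sum_filter_mem_pow_card_le {R : Type*} [CommSemiring R] [PartialOrder R]
    [IsOrderedRing R] (h𝒜 : IsLowerSet (𝒜 : Set (Finset α))) (a : α) {x : R} (hx : 0 ≤ x) :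
    ∑ s ∈ 𝒜 with a ∈ s, x ^ #s ≤ x * ∑ s ∈ 𝒜 with a ∉ s, x ^ #s := by
  rw [sum_filter_mem_pow_card_eq_mul_sum_memberSubfamily]
  exact mul_le_mul_of_nonneg_left (sum_le_sum_of_subset_of_nonneg
    h𝒜.memberSubfamily_subset_nonMemberSubfamily fun s _ _ => pow_nonneg hx _) hx

theorem IsLowerSet.sum_filter_mem_pow_card_le_div_mul_sum {K : Type*} [Field K] [LinearOrder K]
    [IsStrictOrderedRing K] (h𝒜 : IsLowerSet (𝒜 : Set (Finset α))) (a : α) {x : K}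
    (hx : 0 ≤ x) :
    ∑ s ∈ 𝒜 with a ∈ s, x ^ #s ≤ x / (1 + x) * ∑ s ∈ 𝒜, x ^ #s := by
  rw [← sum_filter_add_sum_filter_not 𝒜 (a ∈ ·), div_mul_eq_mul_div, le_div_iff₀ (by positivity)]
  linear_combination h𝒜.sum_filter_mem_pow_card_le a hx

end LowerSet

theorem isLowerSet_setOf_isMatchingFinset {V : Type} (G : SimpleGraph V) :
    IsLowerSet {M | IsMatchingFinset G M} :=
  fun _ _ hNM ⟨hedges, hdisj⟩ =>
    ⟨fun f hf => hedges f (hNM hf), fun f hf g hg => hdisj f (hNM hf) g (hNM hg)⟩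

theorem edge_occupancy_probability_le_general
    {V : Type} [Fintype V] [DecidableEq V] (G : SimpleGraph V)
    (e : Sym2 V) (lam : ℝ) (hlam : 0 ≤ lam) :
    (∑ M ∈ Finset.univ.filter
        (fun M : Finset (Sym2 V) => IsMatchingFinset G M ∧ e ∈ M), lam ^ M.card) ≤
      (lam / (1 + lam)) * Zmatch G lam := by
  have hlower : IsLowerSet ((univ.filter (IsMatchingFinset G) : Finset (Finset (Sym2 V))) :
      Set (Finset (Sym2 V))) := by
    simpa only [coe_filter, mem_univ, true_and] using isLowerSet_setOf_isMatchingFinset G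
  rw [← filter_filter]
  exact hlower.sum_filter_mem_pow_card_le_div_mul_sum e hlam

/-- for any graph `G`, edge `e` of `G` and `λ ≥ 0`, the total weight of
matchings containing `e` is at most `λ/(1+λ)` times the total weight of all matchings. -/
theorem edge_occupancy_probability_le
    {V : Type} [Fintype V] [DecidableEq V] (G : SimpleGraph V)
    (e : Sym2 V) (he : e ∈ G.edgeSet) (lam : ℝ) (hlam : 0 ≤ lam) :
    (∑ M ∈ Finset.univ.filter
        (fun M : Finset (Sym2 V) => IsMatchingFinset G M ∧ e ∈ M), lam ^ M.card) ≤
      (lam / (1 + lam)) * Zmatch G lam :=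
  edge_occupancy_probability_le_general G e lam hlam
end

section
/- For all integers q ≥ 3, d ≥ 1, every integer n divisible by 2d, and every integer k ≥ 1, one has k·q^{2d}·c^q_k(H_{d,n}) ≥ (n/(2d) − k)·c^q_{k−1}(H_{d,n}). -/
/-!
Write `m = n / (2d)`. A coloring with `k - 1` monochromatic edges leaves at least `m - (k - 1)`
copies of `K_{d,d}` without a monochromatic edge. Recoloring one such copy by a fixed coloring of
`K_{d,d}` with exactly one monochromatic edge (three colors suffice for this) gives a coloring with
`k` monochromatic edges in which that copy has one. For a fixed copy, this recoloring forgets only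
the `q^{2d}` colors of that copy, and a coloring with `k` monochromatic edges has at most `k`
copies that contain one. Double counting (coloring, copy) pairs gives
`(m - (k - 1)) c_{k-1} ≤ q^{2d} k c_k`.
-/


open Finset
open scoped Classical

variable {V : Type} [Fintype V] [DecidableEq V]

theorem forall_mem_mk_forall_mem_mk_eq_iff {α β : Type*} (f : α → β) (u v : α) :
    (∀ x ∈ s(u, v), ∀ y ∈ s(u, v), f x = f y) ↔ f u = f v := by
  simp only [Sym2.mem_iff, forall_eq_or_imp, forall_eq, true_and, and_true]
  exact ⟨And.left, fun h => ⟨h, h.symm⟩⟩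

theorem exists_monoCount_completeBipartiteGraph_eq_one {α β : Type} [Fintype α] [DecidableEq α]
    [Fintype β] [DecidableEq β] {q : ℕ} (hq : 3 ≤ q) (a₀ : α) (b₀ : β) :
    ∃ σ : α ⊕ β → Fin q, monoCount (completeBipartiteGraph α β) σ = 1 := by
  let σ : α ⊕ β → Fin q :=
    Sum.elim (fun a => if a = a₀ then ⟨0, by omega⟩ else ⟨1, by omega⟩)
      (fun b => if b = b₀ then ⟨0, by omega⟩ else ⟨2, by omega⟩)
  refine ⟨σ, card_eq_one.2 ⟨s(Sum.inl a₀, Sum.inr b₀), ?_⟩⟩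
  ext e
  induction e using Sym2.ind with
  | _ u v =>
    rcases u with a | b <;> rcases v with a' | b' <;> simp [σ] <;> split_ifs <;>
      simp_all [Fin.ext_iff]

theorem card_filter_ne_zero_le_sum {ι : Type*} (s : Finset ι) (f : ι → ℕ) :
    #(s.filter (f · ≠ 0)) ≤ ∑ i ∈ s, f i :=
  calc #(s.filter (f · ≠ 0))
      = ∑ _i ∈ s.filter (f · ≠ 0), 1 := card_eq_sum_ones _
    _ ≤ ∑ i ∈ s.filter (f · ≠ 0), f i :=
        sum_le_sum fun _ hi => Nat.one_le_iff_ne_zero.2 (mem_filter.1 hi).2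
    _ ≤ ∑ i ∈ s, f i := sum_le_sum_of_subset (filter_subset _ _)

noncomputable def colorings (G : SimpleGraph V) (q k : ℕ) : Finset (V → Fin q) :=
  univ.filter fun χ => monoCount G χ = k

theorem colCount_eq_card_colorings (G : SimpleGraph V) (q k : ℕ) :
    colCount G q k = #(colorings G q k) := rfl

section Recoloring

variable {W : Type} {m q : ℕ}

def recolorCopy (χ : Fin m × W → Fin q) (i : Fin m) (σ : W → Fin q) : Fin m × W → Fin q :=
  Function.uncurry (Function.update (Function.curry χ) i σ)

theorem curry_recolorCopy (χ : Fin m × W → Fin q) (i : Fin m) (σ : W → Fin q) :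
    Function.curry (recolorCopy χ i σ) = Function.update (Function.curry χ) i σ :=
  Function.curry_uncurry _

theorem eq_of_recolorCopy_eq {χ χ' : Fin m × W → Fin q} {i : Fin m} {σ : W → Fin q}
    (h : recolorCopy χ i σ = recolorCopy χ' i σ)
    (hi : Function.curry χ i = Function.curry χ' i) :
    χ = χ' := by
  apply Function.curry_injective
  calc Function.curry χ = Function.update (Function.update (Function.curry χ) i σ) i
        (Function.curry χ i) := by simp
    _ = Function.update (Function.update (Function.curry χ') i σ) i (Function.curry χ' i) := by
        rw [← curry_recolorCopy, h, hi, curry_recolorCopy]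
    _ = Function.curry χ' := by simp

end Recoloring

section Copies

variable {W : Type} [Fintype W] [DecidableEq W] (H : SimpleGraph W) {m q : ℕ}

theorem monoCount_copies (χ : Fin m × W → Fin q) :
    monoCount (copies m H) χ = ∑ i, monoCount H (Function.curry χ i) := by
  let monoEdges : ∀ i : Fin m, Finset (Sym2 (Fin m × W)) := fun i =>
    (univ.filter fun e : Sym2 W =>
        e ∈ H.edgeSet ∧ ∀ v ∈ e, ∀ w ∈ e, χ (i, v) = χ (i, w)).map
      ⟨Sym2.map (Prod.mk i), Sym2.map.injective (Prod.mk_right_injective i)⟩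
  have hunion : (univ.filter fun e : Sym2 (Fin m × W) =>
      e ∈ (copies m H).edgeSet ∧ ∀ v ∈ e, ∀ w ∈ e, χ v = χ w) =
        univ.biUnion monoEdges := by
    ext e
    simp only [monoEdges, mem_filter, mem_univ, true_and, mem_biUnion, mem_map,
      Function.Embedding.coeFn_mk]
    constructor
    · induction e using Sym2.ind with
      | _ u v =>
        obtain ⟨i, a⟩ := u
        obtain ⟨j, b⟩ := v
        rintro ⟨⟨hij, hadj⟩, hmono⟩
        obtain rfl : i = j := hij
        refine ⟨i, s(a, b), ⟨hadj, ?_⟩, rfl⟩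
        simpa only [forall_mem_mk_forall_mem_mk_eq_iff] using hmono
    · rintro ⟨_, e', ⟨hadj, hmono⟩, rfl⟩
      induction e' using Sym2.ind with
      | _ a b =>
        simp only [Sym2.map_mk, SimpleGraph.mem_edgeSet, forall_mem_mk_forall_mem_mk_eq_iff]
          at hadj hmono ⊢
        exact ⟨⟨rfl, hadj⟩, hmono⟩
  have hdisj : (Set.univ : Set (Fin m)).PairwiseDisjoint monoEdges := by
    intro i _ j _ hij
    simp only [Function.onFun, monoEdges, disjoint_left, mem_map, Function.Embedding.coeFn_mk]
    rintro _ ⟨e, -, rfl⟩ ⟨e', -, he⟩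
    induction e using Sym2.ind with
    | _ a b =>
      induction e' using Sym2.ind with
      | _ c d =>
        simp only [Sym2.map_mk, Sym2.eq_iff, Prod.mk.injEq] at he
        rcases he with ⟨⟨h, -⟩, -⟩ | ⟨⟨h, -⟩, -⟩ <;> exact hij h.symm
  rw [monoCount, hunion, card_biUnion (by simpa using hdisj)]
  simp only [monoEdges, card_map]
  rfl

theorem monoCount_recolorCopy_add (χ : Fin m × W → Fin q) (i : Fin m) (σ : W → Fin q) :
    monoCount (copies m H) (recolorCopy χ i σ) + monoCount H (Function.curry χ i) =
      monoCount (copies m H) χ + monoCount H σ := by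
  rw [monoCount_copies, monoCount_copies, curry_recolorCopy]
  simp_rw [Function.apply_update (fun _ => monoCount H)]
  rw [sum_update_of_mem (mem_univ i), sdiff_singleton_eq_erase,
    ← add_sum_erase univ _ (mem_univ i)]
  ring


theorem card_filter_curry_ne_zero_le (χ : Fin m × W → Fin q) :
    #(univ.filter fun i => monoCount H (Function.curry χ i) ≠ 0) ≤ monoCount (copies m H) χ :=
  monoCount_copies H χ ▸ card_filter_ne_zero_le_sum _ _

theorem sub_monoCount_le_card_filter_curry_eq_zero (χ : Fin m × W → Fin q) :
    m - monoCount (copies m H) χ ≤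
      #(univ.filter fun i => monoCount H (Function.curry χ i) = 0) := by
  have hsplit := card_filter_add_card_filter_not (s := (univ : Finset (Fin m)))
    fun i => monoCount H (Function.curry χ i) = 0
  have := card_filter_curry_ne_zero_le H χ
  simp only [ne_eq] at this
  rw [card_univ, Fintype.card_fin] at hsplit
  omega

theorem card_colorings_curry_eq_zero_le {σ : W → Fin q} (hσ : monoCount H σ = 1) (j : ℕ)
    (i : Fin m) :
    #((colorings (copies m H) q j).filter fun χ => monoCount H (Function.curry χ i) = 0) ≤
      q ^ Fintype.card W * #((colorings (copies m H) q (j + 1)).filter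
        fun χ => monoCount H (Function.curry χ i) ≠ 0) := by
  refine card_le_mul_card_image_of_maps_to (f := fun χ => recolorCopy χ i σ) ?_ _ fun ψ _ => ?_
  · intro χ hχ
    simp only [colorings, mem_filter, mem_univ, true_and] at hχ ⊢
    have := monoCount_recolorCopy_add H χ i σ
    rw [curry_recolorCopy, Function.update_self]
    omega
  · calc _ ≤ #(univ : Finset (W → Fin q)) := by
          refine card_le_card_of_injOn (fun χ => Function.curry χ i) (fun _ _ => mem_univ _) ?_
          intro χ hχ χ' hχ' hi
          simp only [coe_filter, Set.mem_ofPred_eq] at hχ hχ'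
          exact eq_of_recolorCopy_eq (hχ.2.trans hχ'.2.symm) hi
      _ = q ^ Fintype.card W := by simp

theorem sub_mul_colCount_copies_le {σ : W → Fin q} (hσ : monoCount H σ = 1) (j : ℕ) :
    (m - j) * colCount (copies m H) q j ≤
      q ^ Fintype.card W * ((j + 1) * colCount (copies m H) q (j + 1)) := by
  simp only [colCount_eq_card_colorings]
  calc (m - j) * #(colorings (copies m H) q j)
      = ∑ χ ∈ colorings (copies m H) q j, (m - j) := by rw [sum_const, smul_eq_mul, mul_comm]
    _ ≤ ∑ χ ∈ colorings (copies m H) q j,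
          #(univ.filter fun i => monoCount H (Function.curry χ i) = 0) := by
        refine sum_le_sum fun χ hχ => ?_
        have := sub_monoCount_le_card_filter_curry_eq_zero H χ
        rwa [(mem_filter.1 hχ).2] at this
    _ = ∑ i, #((colorings (copies m H) q j).filter
          fun χ => monoCount H (Function.curry χ i) = 0) :=
        sum_card_bipartiteAbove_eq_sum_card_bipartiteBelow _
    _ ≤ ∑ i, q ^ Fintype.card W * #((colorings (copies m H) q (j + 1)).filter
          fun χ => monoCount H (Function.curry χ i) ≠ 0) :=
        sum_le_sum fun i _ => card_colorings_curry_eq_zero_le H hσ j i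
    _ = q ^ Fintype.card W * ∑ χ ∈ colorings (copies m H) q (j + 1),
          #(univ.filter fun i => monoCount H (Function.curry χ i) ≠ 0) := by
        rw [← mul_sum]
        exact congrArg _ (sum_card_bipartiteAbove_eq_sum_card_bipartiteBelow _).symm
    _ ≤ q ^ Fintype.card W * ∑ χ ∈ colorings (copies m H) q (j + 1), (j + 1) := by
        gcongr with χ hχ
        exact (mem_filter.1 hχ).2 ▸ card_filter_curry_ne_zero_le H χ
    _ = q ^ Fintype.card W * ((j + 1) * #(colorings (copies m H) q (j + 1))) := by
        rw [sum_const, smul_eq_mul, mul_comm (j + 1)]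

end Copies

theorem coloring_coefficient_lower_ratio_general (q d : ℕ) (hq : 3 ≤ q) (hd : 1 ≤ d)
    (n : ℕ) (k : ℕ) (hk : 1 ≤ k) :
    ((n : ℝ) / (2 * d) - k) * (colCount (Hgraph d (n / (2 * d))) q (k - 1) : ℝ) ≤
      (k : ℝ) * (q : ℝ) ^ (2 * d) * (colCount (Hgraph d (n / (2 * d))) q k : ℝ) := by
  obtain ⟨j, rfl⟩ : ∃ j, k = j + 1 := ⟨k - 1, by omega⟩
  obtain ⟨σ, hσ⟩ :=
    exists_monoCount_completeBipartiteGraph_eq_one hq (⟨0, hd⟩ : Fin d) (⟨0, hd⟩ : Fin d)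
  have hcount := sub_mul_colCount_copies_le (m := n / (2 * d)) _ hσ j
  rw [Fintype.card_sum, Fintype.card_fin, ← two_mul] at hcount
  have hcopies : (n : ℝ) / (2 * d) - (j + 1) ≤ ((n / (2 * d) - j : ℕ) : ℝ) := by
    have hfloor := Nat.sub_one_lt_floor ((n : ℝ) / ((2 * d : ℕ) : ℝ))
    rw [Nat.floor_div_eq_div] at hfloor
    have : ((n / (2 * d) : ℕ) : ℝ) ≤ ((n / (2 * d) - j : ℕ) : ℝ) + j := by
      exact_mod_cast le_tsub_add
    push_cast at hfloor
    linarith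
  rw [Nat.add_sub_cancel]
  calc ((n : ℝ) / (2 * d) - ↑(j + 1)) * colCount (Hgraph d (n / (2 * d))) q j
      ≤ ((n / (2 * d) - j : ℕ) : ℝ) * colCount (Hgraph d (n / (2 * d))) q j := by
        push_cast
        gcongr
    _ ≤ _ := by
        rw [mul_comm (_ : ℝ) ((q : ℝ) ^ _), mul_assoc]
        exact_mod_cast hcount

/-- for `q ≥ 3`, `d ≥ 1`, `2d ∣ n` and `k ≥ 1`,
`k·q^{2d}·c^q_k(H_{d,n}) ≥ (n/(2d) - k)·c^q_{k-1}(H_{d,n})`. -/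
theorem coloring_coefficient_lower_ratio (q d : ℕ) (hq : 3 ≤ q) (hd : 1 ≤ d)
    (n : ℕ) (hn : 2 * d ∣ n) (k : ℕ) (hk : 1 ≤ k) :
    ((n : ℝ) / (2 * d) - k) * (colCount (Hgraph d (n / (2 * d))) q (k - 1) : ℝ) ≤
      (k : ℝ) * (q : ℝ) ^ (2 * d) * (colCount (Hgraph d (n / (2 * d))) q k : ℝ) :=
  coloring_coefficient_lower_ratio_general q d hq hd n k hk
end

section
/- Let n ≥ 0 and let a_0,…,a_n and b_0,…,b_n be nonnegative reals with a_0 = b_0 > 0, and set P(λ) = ∑_{k=0}^n a_k λ^k and Q(λ) = ∑_{k=0}^n b_k λ^k (so P(λ) > 0 and Q(λ) > 0 for all λ ≥ 0). If P′(λ)/P(λ) ≥ Q′(λ)/Q(λ) for all λ > 0, then P(λ) ≥ Q(λ) for all λ ≥ 0. -/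
/-!
On `[0, ∞)` both polynomials are positive, so `Q' / Q ≤ P' / P` is equivalent to
`Q' P ≤ P' Q`, i.e. to `(P / Q)' ≥ 0`. Hence `P / Q` is nondecreasing there, and it starts
at `P 0 / Q 0 = 1`.
-/

open Finset

theorem monotoneOn_div_of_logDeriv_le {f g : ℝ → ℝ} {D : Set ℝ} (hD : Convex ℝ D)
    (hf : DifferentiableOn ℝ f D) (hg : DifferentiableOn ℝ g D)
    (hf_pos : ∀ x ∈ interior D, 0 < f x) (hg_pos : ∀ x ∈ D, 0 < g x)
    (h : ∀ x ∈ interior D, logDeriv g x ≤ logDeriv f x) :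
    MonotoneOn (fun x => f x / g x) D := by
  have hdiv : DifferentiableOn ℝ (fun x => f x / g x) D :=
    hf.div hg fun x hx => (hg_pos x hx).ne'
  refine monotoneOn_of_deriv_nonneg hD hdiv.continuousOn (hdiv.mono interior_subset) ?_
  intro x hx
  have hxD : D ∈ nhds x := mem_interior_iff_mem_nhds.mp hx
  have hfx := hf_pos x hx
  have hgx := hg_pos x (interior_subset hx)
  have hcross : deriv g x * f x ≤ deriv f x * g x := by
    have := h x hx
    rwa [logDeriv_apply, logDeriv_apply, div_le_div_iff₀ hgx hfx] at this
  rw [deriv_fun_div (hf.differentiableAt hxD) (hg.differentiableAt hxD) hgx.ne']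
  exact div_nonneg (by linarith) (sq_nonneg _)

theorem le_of_logDeriv_le_of_eq {f g : ℝ → ℝ} (hf : DifferentiableOn ℝ f (Set.Ici 0))
    (hg : DifferentiableOn ℝ g (Set.Ici 0)) (hf_pos : ∀ x, 0 < x → 0 < f x)
    (hg_pos : ∀ x, 0 ≤ x → 0 < g x) (h : ∀ x, 0 < x → logDeriv g x ≤ logDeriv f x)
    (h0 : f 0 = g 0) {x : ℝ} (hx : 0 ≤ x) : g x ≤ f x := by
  have hmono : MonotoneOn (fun x => f x / g x) (Set.Ici 0) := by
    refine monotoneOn_div_of_logDeriv_le (convex_Ici 0) hf hg ?_ hg_pos ?_ <;>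
      · rw [interior_Ici]
        assumption
  have h01 : f 0 / g 0 ≤ f x / g x := hmono Set.self_mem_Ici hx hx
  rwa [h0, div_self (hg_pos 0 le_rfl).ne', one_le_div (hg_pos x hx)] at h01

section PolynomialSums

variable (n : ℕ) (c : ℕ → ℝ)

theorem differentiable_sum_mul_pow :
    Differentiable ℝ fun x : ℝ => ∑ k ∈ range (n + 1), c k * x ^ k :=
  Differentiable.fun_sum fun k _ => (differentiable_pow k).const_mul _

theorem sum_mul_pow_zero : ∑ k ∈ range (n + 1), c k * (0 : ℝ) ^ k = c 0 := by
  simp [sum_range_succ']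

variable {n c}

theorem sum_mul_pow_pos (hc : ∀ k ≤ n, 0 ≤ c k) (hc0 : 0 < c 0) {x : ℝ} (hx : 0 ≤ x) :
    0 < ∑ k ∈ range (n + 1), c k * x ^ k := by
  calc 0 < c 0 * x ^ 0 := by simpa using hc0
    _ ≤ ∑ k ∈ range (n + 1), c k * x ^ k :=
      single_le_sum (fun k hk => mul_nonneg (hc k (Nat.lt_succ_iff.mp (mem_range.mp hk)))
        (pow_nonneg hx k)) (mem_range.mpr n.succ_pos)

end PolynomialSums

/-- OCC ⇒ PART: if `P` and `Q` are polynomials of degree at most `n` with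
nonnegative coefficients, equal positive constant terms, and `P′/P ≥ Q′/Q` on `(0,∞)`,
then `P ≥ Q` on `[0,∞)`. -/
theorem occ_implies_part (n : ℕ) (a b : ℕ → ℝ)
    (ha : ∀ k ≤ n, 0 ≤ a k) (hb : ∀ k ≤ n, 0 ≤ b k)
    (hab : a 0 = b 0) (ha0 : 0 < a 0)
    (P Q : ℝ → ℝ)
    (hP : P = fun x => ∑ k ∈ Finset.range (n + 1), a k * x ^ k)
    (hQ : Q = fun x => ∑ k ∈ Finset.range (n + 1), b k * x ^ k)
    (h : ∀ x : ℝ, 0 < x → deriv Q x / Q x ≤ deriv P x / P x) :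
    ∀ x : ℝ, 0 ≤ x → Q x ≤ P x := by
  subst hP hQ
  intro x hx
  refine le_of_logDeriv_le_of_eq (differentiable_sum_mul_pow n a).differentiableOn
    (differentiable_sum_mul_pow n b).differentiableOn
    (fun y hy => sum_mul_pow_pos ha ha0 hy.le) (fun y hy => sum_mul_pow_pos hb (hab ▸ ha0) hy)
    (fun y hy => by simpa only [logDeriv_apply] using h y hy) ?_ hx
  simp only [sum_mul_pow_zero, hab]
end

section
/- Let n ≥ 1 and let a_0,…,a_n and b_0,…,b_n be strictly positive reals with a_0 = b_0, and set P(λ) = ∑_{k=0}^n a_k λ^k and Q(λ) = ∑_{k=0}^n b_k λ^k. If a_{k+1}/a_k ≥ b_{k+1}/b_k for every 0 ≤ k ≤ n−1, then P′(λ)·Q(λ) − Q′(λ)·P(λ) ≥ 0 for all λ ≥ 0; equivalently, λP′(λ)/P(λ) ≥ λQ′(λ)/Q(λ) for all λ > 0. (In fact every coefficient of the polynomial P′Q − Q′P is nonnegative.) -/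
/-!
With `c i = i x^(i-1)` and `y i = x^i` we have
`P'Q - Q'P = ∑ i, ∑ j, (a i b j - a j b i) c i y j`, and symmetrizing in `(i, j)` turns this into
`½ ∑ i, ∑ j, (a i b j - a j b i) (c i y j - c j y i)`. The FV condition says that `a k / b k` is
nondecreasing, and so is `c k / y k = k / x`, so for `x ≥ 0` both factors have the sign of `i - j`.
-/

open Finset

theorem monotoneOn_Iic_of_le_succ {α : Type*} [Preorder α] {f : ℕ → α} {n : ℕ}
    (hf : ∀ k < n, f k ≤ f (k + 1)) : MonotoneOn f (Set.Iic n) := by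
  intro j _ i hi hji
  induction i, hji using Nat.le_induction with
  | base => rfl
  | succ i hji ih =>
    have hin : i < n := hi
    exact (ih hin.le).trans (hf i hin)

theorem sum_sum_nonneg_of_add_swap_nonneg {ι R : Type*} [AddCommMonoid R] [LinearOrder R]
    [IsOrderedCancelAddMonoid R] (s : Finset ι) (F : ι → ι → R)
    (hF : ∀ i ∈ s, ∀ j ∈ s, 0 ≤ F i j + F j i) : 0 ≤ ∑ i ∈ s, ∑ j ∈ s, F i j := by
  have hdouble : ∑ i ∈ s, ∑ j ∈ s, F i j + ∑ i ∈ s, ∑ j ∈ s, F i j =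
      ∑ i ∈ s, ∑ j ∈ s, (F i j + F j i) := by
    conv_lhs => rhs; rw [sum_comm]
    simp only [← sum_add_distrib]
  have hsum : 0 ≤ ∑ i ∈ s, ∑ j ∈ s, F i j + ∑ i ∈ s, ∑ j ∈ s, F i j :=
    hdouble ▸ sum_nonneg fun i hi => sum_nonneg fun j hj => hF i hi j hj
  by_contra! hneg
  exact (add_neg hneg hneg).not_ge hsum

section OrderedRing

variable {ι R : Type*} [LinearOrder ι] [CommRing R] [LinearOrder R] [IsStrictOrderedRing R]

theorem sum_mul_sum_sub_sum_mul_sum_nonneg (s : Finset ι) (a b c y : ι → R)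
    (hab : ∀ i ∈ s, ∀ j ∈ s, j ≤ i → a j * b i ≤ a i * b j)
    (hcy : ∀ i ∈ s, ∀ j ∈ s, j ≤ i → c j * y i ≤ c i * y j) :
    0 ≤ (∑ i ∈ s, a i * c i) * (∑ j ∈ s, b j * y j) -
      (∑ i ∈ s, b i * c i) * (∑ j ∈ s, a j * y j) := by
  have hexpand : (∑ i ∈ s, a i * c i) * (∑ j ∈ s, b j * y j) -
      (∑ i ∈ s, b i * c i) * (∑ j ∈ s, a j * y j) =
      ∑ i ∈ s, ∑ j ∈ s, (a i * b j - a j * b i) * (c i * y j) := by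
    simp only [sum_mul_sum, ← sum_sub_distrib]
    exact sum_congr rfl fun i _ => sum_congr rfl fun j _ => by ring
  rw [hexpand]
  refine sum_sum_nonneg_of_add_swap_nonneg s _ fun i hi j hj => ?_
  have hswap : (a i * b j - a j * b i) * (c i * y j) + (a j * b i - a i * b j) * (c j * y i) =
      (a i * b j - a j * b i) * (c i * y j - c j * y i) := by ring
  rw [hswap]
  rcases le_total j i with hji | hij
  · exact mul_nonneg (sub_nonneg.2 (hab i hi j hj hji)) (sub_nonneg.2 (hcy i hi j hj hji))
  · exact mul_nonneg_of_nonpos_of_nonpos (sub_nonpos.2 (hab j hj i hi hij))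
      (sub_nonpos.2 (hcy j hj i hi hij))

theorem natCast_mul_pow_pred_mul_pow_le {x : R} (hx : 0 ≤ x) {i j : ℕ} (hji : j ≤ i) :
    j * x ^ (j - 1) * x ^ i ≤ i * x ^ (i - 1) * x ^ j := by
  rcases Nat.eq_zero_or_pos j with rfl | hj
  · simp only [Nat.cast_zero, zero_mul]
    positivity
  · have hpow : x ^ (j - 1) * x ^ i = x ^ (i - 1) * x ^ j := by
      rw [← pow_add, ← pow_add]
      congr 1
      omega
    rw [mul_assoc, mul_assoc, hpow]
    exact mul_le_mul_of_nonneg_right (by exact_mod_cast hji) (by positivity)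

end OrderedRing

theorem hasDerivAt_sum_mul_pow {𝕜 : Type*} [NontriviallyNormedField 𝕜] (s : Finset ℕ)
    (a : ℕ → 𝕜) (x : 𝕜) :
    HasDerivAt (fun x => ∑ k ∈ s, a k * x ^ k) (∑ k ∈ s, a k * (k * x ^ (k - 1))) x :=
  HasDerivAt.fun_sum fun k _ => (hasDerivAt_pow k x).const_mul (a k)

theorem fv_implies_occ_general (n : ℕ) (a b : ℕ → ℝ)
    (ha : ∀ k ≤ n, 0 < a k) (hb : ∀ k ≤ n, 0 < b k)
    (hfv : ∀ k < n, b (k + 1) / b k ≤ a (k + 1) / a k)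
    (P Q : ℝ → ℝ)
    (hP : P = fun x => ∑ k ∈ Finset.range (n + 1), a k * x ^ k)
    (hQ : Q = fun x => ∑ k ∈ Finset.range (n + 1), b k * x ^ k) :
    (∀ x : ℝ, 0 ≤ x → 0 ≤ deriv P x * Q x - deriv Q x * P x) ∧
      ∀ x : ℝ, 0 < x → x * deriv Q x / Q x ≤ x * deriv P x / P x := by
  have hratio : MonotoneOn (fun k => a k / b k) (Set.Iic n) := by
    refine monotoneOn_Iic_of_le_succ fun k hk => ?_
    have := hfv k hk
    rw [div_le_div_iff₀ (hb k hk.le) (ha k hk.le)] at this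
    rw [div_le_div_iff₀ (hb k hk.le) (hb (k + 1) hk)]
    linarith
  have hcross : ∀ i ∈ range (n + 1), ∀ j ∈ range (n + 1), j ≤ i → a j * b i ≤ a i * b j := by
    intro i hi j hj hji
    rw [mem_range_succ_iff] at hi hj
    have := hratio hj hi hji
    rwa [div_le_div_iff₀ (hb j hj) (hb i hi)] at this
  have hwronskian : ∀ x : ℝ, 0 ≤ x → 0 ≤ deriv P x * Q x - deriv Q x * P x := by
    intro x hx
    subst hP hQ
    rw [(hasDerivAt_sum_mul_pow _ a x).deriv, (hasDerivAt_sum_mul_pow _ b x).deriv]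
    exact sum_mul_sum_sub_sum_mul_sum_nonneg _ a b _ _ hcross
      fun i _ j _ => natCast_mul_pow_pred_mul_pow_le hx
  have hpos : ∀ c : ℕ → ℝ, (∀ k ≤ n, 0 < c k) → ∀ x : ℝ, 0 < x →
      0 < ∑ k ∈ range (n + 1), c k * x ^ k := fun c hc x hx =>
    sum_pos (fun k hk => mul_pos (hc k (mem_range_succ_iff.1 hk)) (pow_pos hx k))
      nonempty_range_add_one
  refine ⟨hwronskian, fun x hx => ?_⟩
  have hPx : 0 < P x := hP ▸ hpos a ha x hx
  have hQx : 0 < Q x := hQ ▸ hpos b hb x hx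
  rw [div_le_div_iff₀ hQx hPx]
  linear_combination mul_nonneg hx.le (hwronskian x hx.le)

/-- FV ⇒ OCC: if `P` and `Q` are polynomials of degree at most `n` with
strictly positive coefficients, equal constant terms, and `a_{k+1}/a_k ≥ b_{k+1}/b_k` for
all `0 ≤ k ≤ n-1`, then `P′Q - Q′P ≥ 0` on `[0,∞)`; equivalently
`λP′(λ)/P(λ) ≥ λQ′(λ)/Q(λ)` for all `λ > 0`. -/
theorem fv_implies_occ (n : ℕ) (hn : 1 ≤ n) (a b : ℕ → ℝ)
    (ha : ∀ k ≤ n, 0 < a k) (hb : ∀ k ≤ n, 0 < b k)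
    (hab : a 0 = b 0)
    (hfv : ∀ k < n, b (k + 1) / b k ≤ a (k + 1) / a k)
    (P Q : ℝ → ℝ)
    (hP : P = fun x => ∑ k ∈ Finset.range (n + 1), a k * x ^ k)
    (hQ : Q = fun x => ∑ k ∈ Finset.range (n + 1), b k * x ^ k) :
    (∀ x : ℝ, 0 ≤ x → 0 ≤ deriv P x * Q x - deriv Q x * P x) ∧
      ∀ x : ℝ, 0 < x → x * deriv Q x / Q x ≤ x * deriv P x / P x :=
  fv_implies_occ_general n a b ha hb hfv P Q hP hQ
end
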